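/- Breaking cluster contiguity introduces a cycle between clusters: let E be the edge relation of a finite DAG and u : V → K a cluster mapping. Suppose there exist vertices x, y, z with u(x) = u(z), u(y) ≠ u(x), a directed path from x to y, and a directed path from y to z (so a path leaves cluster u(x) through a node of a different cluster and returns to cluster u(x)). Then the quotient cluster relation R, defined by R c d ↔ c ≠ d ∧ ∃ a b, E a b ∧ u(a) = c ∧ u(b) = d, has a directed cycle, i.e., there exists a cluster c with a nonempty R-path from c back to c (Relation.TransGen R c c). -/
import Mathlib

/-- Breaking cluster contiguity introduces a cycle between clusters: if a directed path leaves
cluster `u x` through a node `y` of a different cluster and returns to a node `z` of cluster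
`u x`, then the quotient cluster relation `R c d ↔ c ≠ d ∧ ∃ a b, E a b ∧ u a = c ∧ u b = d`
has a directed cycle. -/
theorem contiguity_break_gives_cluster_cycle {V K : Type*} [Fintype V]
    (E : V → V → Prop) (hacyc : Irreflexive (Relation.TransGen E))
    (u : V → K) (x y z : V)
    (hxz : u x = u z) (hyx : u y ≠ u x)
    (hxy : Relation.TransGen E x y) (hyz : Relation.TransGen E y z) :
    ∃ c : K, Relation.TransGen
      (fun c d : K => c ≠ d ∧ ∃ a b : V, E a b ∧ u a = c ∧ u b = d) c c := by
  set R := fun c d : K => c ≠ d ∧ ∃ a b : V, E a b ∧ u a = c ∧ u b = d with hR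
  have key : ∀ a b : V, Relation.TransGen E a b → Relation.ReflTransGen R (u a) (u b) := by
    intro a b h
    induction h with
    | @single b h =>
      by_cases he : u a = u b
      · exact he ▸ Relation.ReflTransGen.refl
      · exact Relation.ReflTransGen.single ⟨he, _, _, h, rfl, rfl⟩
    | @tail p q _ h ih =>
      refine ih.trans ?_
      by_cases he : u p = u q
      · exact he ▸ Relation.ReflTransGen.refl
      · exact Relation.ReflTransGen.single ⟨he, _, _, h, rfl, rfl⟩
  have h1 : Relation.ReflTransGen R (u x) (u y) := key _ _ hxy
  have h2 : Relation.ReflTransGen R (u y) (u z) := key _ _ hyz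
  have h1' : Relation.TransGen R (u x) (u y) :=
    (Relation.reflTransGen_iff_eq_or_transGen.mp h1).resolve_left (fun h => hyx h)
  exact ⟨u x, Relation.TransGen.trans_left h1' (hxz ▸ h2)⟩
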